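/- Fix d ≥ 2, 0 < p⋆ ≤ 1/(2(d+1)), and η₁, η₂ ∈ Δ_d, and let P₁, P₂ be the laws of a length-m trajectory under (M_{η₁}, p) and (M_{η₂}, p) respectively. Let N_{d+1}(x) = ∑_{t=1}^m 1{x_t = d+1}. Then for every n with 1 ≤ n and 2n ≤ m + 1: TV( P₁(· | N_{d+1} ≤ n), P₂(· | N_{d+1} ≤ n) ) ≤ TV( η₁^{⊗n}, η₂^{⊗n} ). -/

import Mathlib

open Finset

noncomputable section

/-- A row-stochastic matrix. -/
def IsStochastic {d : ℕ} (M : Matrix (Fin d) (Fin d) ℝ) : Prop :=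
  (∀ i j, 0 ≤ M i j) ∧ ∀ i, ∑ j, M i j = 1

/-- A probability distribution on `Fin d`. -/
def IsDist {d : ℕ} (μ : Fin d → ℝ) : Prop :=
  (∀ i, 0 ≤ μ i) ∧ ∑ i, μ i = 1

/-- Probability of a length-`m` trajectory under the Markov chain `(M, μ)`:
`μ(x₁) ∏_{t=1}^{m-1} M(x_t, x_{t+1})`. -/
def trajP {d m : ℕ} (M : Matrix (Fin d) (Fin d) ℝ) (μ : Fin d → ℝ)
    (x : Fin m → Fin d) : ℝ :=
  (if h : 0 < m then μ (x ⟨0, h⟩) else 1) *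
    ∏ t : Fin (m - 1),
      M (x ⟨t.1, by have h2 := t.2; omega⟩) (x ⟨t.1 + 1, by have h2 := t.2; omega⟩)


/-- The distribution `p` on `[d+1]`: `p(d+1) = p⋆`, `p(i) = (1-p⋆)/d` for `i ∈ [d]`. -/
def pInit (d : ℕ) (ps : ℝ) : Fin (d + 1) → ℝ :=
  fun i => if i.1 = d then ps else (1 - ps) / d

/-- The chain `M_η ∈ G_{p⋆}`: rows `1,…,d` equal `p`, row `d+1` is `(η(1),…,η(d),0)`. -/
def MG (d : ℕ) (ps : ℝ) (η : Fin d → ℝ) : Matrix (Fin (d + 1)) (Fin (d + 1)) ℝ :=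
  Matrix.of fun i j =>
    if i.1 = d then (if h : j.1 = d then 0 else η ⟨j.1, by have h2 := j.2; omega⟩)
    else pInit d ps j

/-- Number of visits to state `d+1` in a trajectory. -/
def Nlast (d m : ℕ) (x : Fin m → Fin (d + 1)) : ℕ :=
  (Finset.univ.filter (fun t => (x t).1 = d)).card

open scoped Classical in
/-- The conditional distribution of a length-`m` trajectory of `(M_η, p)` given the
event `E` (with the convention `0/0 = 0`). -/
def condP {d m : ℕ} (ps : ℝ) (η : Fin d → ℝ)
    (E : (Fin m → Fin (d + 1)) → Prop) (x : Fin m → Fin (d + 1)) : ℝ :=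
  (if E x then trajP (MG d ps η) (pInit d ps) x else 0) /
    ∑ y, if E y then trajP (MG d ps η) (pInit d ps) y else 0

/-- Total variation distance between two distributions on a finite set. -/
def tvDist {S : Type*} [Fintype S] (P Q : S → ℝ) : ℝ := (1 / 2) * ∑ x, |P x - Q x|

/-- The `n`-fold product distribution `η^{⊗n}` on `[d]^n`. -/
def prodP {d : ℕ} (η : Fin d → ℝ) (n : ℕ) (x : Fin n → Fin d) : ℝ := ∏ s, η (x s)

/-!
Under `M_η`, the visits to `d+1` and every state not immediately following such a visit are
drawn independently of `η`, while each state right after a visit to `d+1` is drawn from `η`.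
So the probability of a trajectory is (the `η`-free weight of its skeleton, which forgets
the `k ≤ N_{d+1}` states following the visits) × `η^{⊗k}`(those states). Summing over the
fibres of the skeleton map, the normalising constant given `N_{d+1} ≤ n` does not depend on `η`,
and the conditioned law is a mixture, with `η`-free weights, of the laws `η^{⊗k}`, `k ≤ n`.
TV of such a mixture is at most the largest TV of its components, and
`TV(η₁^{⊗k}, η₂^{⊗k})` is nondecreasing in `k` because marginals contract TV.
-/

theorem tvDist_nonneg {S : Type*} [Fintype S] (P Q : S → ℝ) : 0 ≤ tvDist P Q := by
  unfold tvDist; positivity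

theorem tvDist_div_const {S : Type*} [Fintype S] (P Q : S → ℝ) (c : ℝ) :
    tvDist (fun x => P x / c) (fun x => Q x / c) = tvDist P Q / |c| := by
  simp only [tvDist, ← sub_div, abs_div, ← sum_div, mul_div_assoc]

theorem tvDist_comp_equiv {S T : Type*} [Fintype S] [Fintype T] (e : S ≃ T) (P Q : T → ℝ) :
    tvDist (P ∘ e) (Q ∘ e) = tvDist P Q := by
  simp only [tvDist, Function.comp_apply, e.sum_comp fun t => |P t - Q t|]

theorem tvDist_marginal_le {S T : Type*} [Fintype S] [Fintype T] (P Q : S × T → ℝ) :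
    tvDist (fun s => ∑ t, P (s, t)) (fun s => ∑ t, Q (s, t)) ≤ tvDist P Q := by
  unfold tvDist
  gcongr
  rw [Fintype.sum_prod_type]
  gcongr with s
  rw [← sum_sub_distrib]
  exact abs_sum_le_sum_abs _ _

def piDist {α : Type*} (η : α → ℝ) (ι : Type*) [Fintype ι] (y : ι → α) : ℝ := ∏ i, η (y i)

section piDist

variable {α : Type*} [Fintype α] {η η₁ η₂ : α → ℝ}

theorem sum_piDist (ι : Type*) [Fintype ι] [DecidableEq ι] (hη : ∑ a, η a = 1) :
    ∑ y, piDist η ι y = 1 := by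
  simp [piDist, ← Fintype.prod_sum, hη]

theorem tvDist_piDist_congr {ι κ : Type*} [Fintype ι] [DecidableEq ι] [Fintype κ]
    [DecidableEq κ] (e : ι ≃ κ) :
    tvDist (piDist η₁ ι) (piDist η₂ ι) = tvDist (piDist η₁ κ) (piDist η₂ κ) := by
  have h (η : α → ℝ) : piDist η ι = piDist η κ ∘ e.arrowCongr (Equiv.refl α) := by
    funext y
    exact (e.symm.prod_comp fun i => η (y i)).symm
  rw [h, h, tvDist_comp_equiv]

theorem tvDist_piDist_le_sum (hη₁ : ∑ a, η₁ a = 1) (hη₂ : ∑ a, η₂ a = 1)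
    (ι ρ : Type*) [Fintype ι] [DecidableEq ι] [Fintype ρ] [DecidableEq ρ] :
    tvDist (piDist η₁ ι) (piDist η₂ ι) ≤ tvDist (piDist η₁ (ι ⊕ ρ)) (piDist η₂ (ι ⊕ ρ)) := by
  have h (η : α → ℝ) (hη : ∑ a, η a = 1) :
      piDist η ι = fun y =>
        ∑ r, (piDist η (ι ⊕ ρ) ∘ (Equiv.sumArrowEquivProdArrow ι ρ α).symm) (y, r) := by
    funext y
    simp [piDist, Fintype.prod_sum_type, ← mul_sum, ← Fintype.prod_sum, hη]
  rw [h η₁ hη₁, h η₂ hη₂, ← tvDist_comp_equiv (Equiv.sumArrowEquivProdArrow ι ρ α).symm]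
  exact tvDist_marginal_le _ _

theorem tvDist_piDist_le_of_card_le (hη₁ : ∑ a, η₁ a = 1) (hη₂ : ∑ a, η₂ a = 1)
    {ι κ : Type*} [Fintype ι] [DecidableEq ι] [Fintype κ] [DecidableEq κ]
    (h : Fintype.card ι ≤ Fintype.card κ) :
    tvDist (piDist η₁ ι) (piDist η₂ ι) ≤ tvDist (piDist η₁ κ) (piDist η₂ κ) := by
  classical
  obtain ⟨e⟩ := Function.Embedding.nonempty_of_card_le h
  calc tvDist (piDist η₁ ι) (piDist η₂ ι)
      ≤ tvDist (piDist η₁ (ι ⊕ ↥(Set.range e)ᶜ)) (piDist η₂ (ι ⊕ ↥(Set.range e)ᶜ)) :=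
        tvDist_piDist_le_sum hη₁ hη₂ _ _
    _ = tvDist (piDist η₁ κ) (piDist η₂ κ) :=
        tvDist_piDist_congr <|
          ((Equiv.ofInjective e e.injective).sumCongr (Equiv.refl _)).trans
            (Equiv.Set.sumCompl _)

end piDist

theorem trajP_nonneg {d m : ℕ} {M : Matrix (Fin d) (Fin d) ℝ} {μ : Fin d → ℝ}
    (hM : ∀ i j, 0 ≤ M i j) (hμ : ∀ i, 0 ≤ μ i) (x : Fin m → Fin d) : 0 ≤ trajP M μ x := by
  refine mul_nonneg ?_ (prod_nonneg fun t _ => hM _ _)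
  split_ifs
  exacts [hμ _, zero_le_one]

section Trajectory

variable {d m : ℕ} {ps : ℝ} {η : Fin d → ℝ}

/-- Transition `t : Fin (m - 1)` of a trajectory goes from time `transSrc t = t` to time
`transTgt t = t + 1`, as in `trajP`. -/
def transSrc (t : Fin (m - 1)) : Fin m := ⟨t, by omega⟩

def transTgt (t : Fin (m - 1)) : Fin m := ⟨t + 1, by omega⟩

theorem transSrc_injective : Function.Injective (transSrc (m := m)) :=
  fun _ _ h => Fin.ext (Fin.mk.inj h)

theorem transTgt_injective : Function.Injective (transTgt (m := m)) :=
  fun _ _ h => Fin.ext (Nat.succ.inj (Fin.mk.inj h))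

theorem trajP_eq_mul_prod {n : ℕ} (M : Matrix (Fin n) (Fin n) ℝ) (μ : Fin n → ℝ)
    (x : Fin m → Fin n) :
    trajP M μ x = (if h : 0 < m then μ (x ⟨0, h⟩) else 1) *
      ∏ t, M (x (transSrc t)) (x (transTgt t)) := rfl

@[simp] theorem pInit_last : pInit d ps (Fin.last d) = ps := by simp [pInit]

@[simp] theorem pInit_castSucc (i : Fin d) : pInit d ps i.castSucc = (1 - ps) / d := by
  simp [pInit, i.isLt.ne]

@[simp] theorem MG_last_last : MG d ps η (Fin.last d) (Fin.last d) = 0 := by simp [MG]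

@[simp] theorem MG_last_castSucc (j : Fin d) : MG d ps η (Fin.last d) j.castSucc = η j := by
  simp [MG, j.isLt.ne]

@[simp] theorem MG_castSucc (i : Fin d) (j : Fin (d + 1)) :
    MG d ps η i.castSucc j = pInit d ps j := by
  simp [MG, i.isLt.ne]

theorem pInit_apply (j : Fin (d + 1)) :
    pInit d ps j = if j = Fin.last d then ps else (1 - ps) / d := by
  simp [pInit, Fin.ext_iff]

theorem MG_one_apply (i j : Fin (d + 1)) :
    MG d ps 1 i j = if i = Fin.last d then (if j = Fin.last d then 0 else 1) else pInit d ps j := by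
  induction i using Fin.lastCases with
  | last => induction j using Fin.lastCases <;> simp
  | cast i => simp [(Fin.castSucc_lt_last i).ne]

theorem pInit_nonneg (h0 : 0 ≤ ps) (h1 : ps ≤ 1) (j : Fin (d + 1)) : 0 ≤ pInit d ps j := by
  induction j using Fin.lastCases with
  | last => simpa using h0
  | cast j => simp only [pInit_castSucc]; exact div_nonneg (by linarith) d.cast_nonneg

theorem MG_one_nonneg (h0 : 0 ≤ ps) (h1 : ps ≤ 1) (i j : Fin (d + 1)) : 0 ≤ MG d ps 1 i j := by
  induction i using Fin.lastCases with
  | last => induction j using Fin.lastCases <;> simp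
  | cast i => simpa using pInit_nonneg h0 h1 j

theorem MG_eq_MG_one_mul (i j : Fin (d + 1)) :
    MG d ps η i j =
      MG d ps 1 i j * if i = Fin.last d then (Fin.snoc η 0 : Fin (d + 1) → ℝ) j else 1 := by
  induction i using Fin.lastCases with
  | last => induction j using Fin.lastCases <;> simp
  | cast i => simp [(Fin.castSucc_lt_last i).ne]

end Trajectory

section Pattern

variable {d m : ℕ} {ps : ℝ} {η : Fin d → ℝ} {x x' : Fin m → Fin (d + 1)}

/-- The state `d+1` of `[d+1]` is `Fin.last d`. -/
def lastSet (x : Fin m → Fin (d + 1)) : Finset (Fin m) := univ.filter fun t => (x t).1 = d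

@[simp] theorem mem_lastSet {s : Fin m} : s ∈ lastSet x ↔ x s = Fin.last d := by
  simp [lastSet, Fin.ext_iff]

theorem Nlast_eq_card_lastSet : Nlast d m x = (lastSet x).card := rfl

theorem eq_last_iff_of_lastSet_eq (h : lastSet x = lastSet x') (s : Fin m) :
    x s = Fin.last d ↔ x' s = Fin.last d := by
  rw [← mem_lastSet, ← mem_lastSet, h]

/-- Under `M_η`, the states at these times are the ones drawn from `η`. -/
def afterLast (x : Fin m → Fin (d + 1)) : Finset (Fin m) :=
  (univ.filter fun t => x (transSrc t) = Fin.last d).map ⟨transTgt, transTgt_injective⟩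

theorem afterLast_congr (h : lastSet x = lastSet x') : afterLast x = afterLast x' := by
  simp only [afterLast, eq_last_iff_of_lastSet_eq h]

theorem card_afterLast_le (x : Fin m → Fin (d + 1)) : (afterLast x).card ≤ (lastSet x).card := by
  rw [afterLast, card_map]
  exact card_le_card_of_injOn transSrc (fun t ht => by simpa using ht)
    transSrc_injective.injOn

/-- `M_η` never stays at `d+1`, so only these trajectories have positive probability. -/
def NoConsecutiveLast (x : Fin m → Fin (d + 1)) : Prop :=
  ∀ t, x (transSrc t) = Fin.last d → x (transTgt t) ≠ Fin.last d

theorem noConsecutiveLast_congr (h : lastSet x = lastSet x') :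
    NoConsecutiveLast x ↔ NoConsecutiveLast x' := by
  simp only [NoConsecutiveLast, ne_eq, eq_last_iff_of_lastSet_eq h]

theorem NoConsecutiveLast.ne_last (hx : NoConsecutiveLast x) {s : Fin m}
    (hs : s ∈ afterLast x) : x s ≠ Fin.last d := by
  obtain ⟨t, ht, rfl⟩ := mem_map.1 hs
  exact hx t (mem_filter.1 ht).2

theorem trajP_MG_eq_zero (hx : ¬ NoConsecutiveLast x) :
    trajP (MG d ps η) (pInit d ps) x = 0 := by
  obtain ⟨t, hsrc, htgt⟩ : ∃ t, x (transSrc t) = Fin.last d ∧ x (transTgt t) = Fin.last d := by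
    simpa [NoConsecutiveLast] using hx
  rw [trajP_eq_mul_prod]
  exact mul_eq_zero_of_right _ (prod_eq_zero (mem_univ t) (by simp [hsrc, htgt]))

theorem trajP_MG_eq_mul_prod (x : Fin m → Fin (d + 1)) :
    trajP (MG d ps η) (pInit d ps) x =
      trajP (MG d ps 1) (pInit d ps) x *
        ∏ s ∈ afterLast x, (Fin.snoc η 0 : Fin (d + 1) → ℝ) (x s) := by
  rw [trajP_eq_mul_prod, trajP_eq_mul_prod, prod_congr rfl fun t _ => MG_eq_MG_one_mul _ _,
    prod_mul_distrib, afterLast, prod_map, prod_ite, prod_const_one, mul_one, mul_assoc]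
  rfl

theorem trajP_MG_one_congr (h : lastSet x = lastSet x') :
    trajP (MG d ps 1) (pInit d ps) x = trajP (MG d ps 1) (pInit d ps) x' := by
  simp only [trajP_eq_mul_prod, MG_one_apply, pInit_apply, eq_last_iff_of_lastSet_eq h]

end Pattern

section Skeleton

variable {d m : ℕ} {x w : Fin m → Fin (d + 1)}

instance : DecidablePred (NoConsecutiveLast (d := d) (m := m)) :=
  fun x => by unfold NoConsecutiveLast; infer_instance

def skel (x : Fin m → Fin (d + 1)) (s : Fin m) : Fin (d + 1) :=
  if s ∈ afterLast x then 0 else x s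

def fill (w : Fin m → Fin (d + 1)) (y : afterLast w → Fin d) (s : Fin m) : Fin (d + 1) :=
  if h : s ∈ afterLast w then (y ⟨s, h⟩).castSucc else w s

theorem fill_apply_coe (y : afterLast w → Fin d) (s : afterLast w) : fill w y s = (y s).castSucc :=
  dif_pos s.2

variable (d m) in
def skeletons : Finset (Fin m → Fin (d + 1)) :=
  univ.filter fun w => NoConsecutiveLast w ∧ skel w = w

variable [NeZero d]

theorem lastSet_skel (hx : NoConsecutiveLast x) : lastSet (skel x) = lastSet x := by
  ext s
  by_cases hs : s ∈ afterLast x <;> simp [skel, hs, NeZero.ne d, hx.ne_last]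

theorem skel_mem_skeletons (hx : NoConsecutiveLast x) : skel x ∈ skeletons d m := by
  have h := lastSet_skel hx
  refine mem_filter.2 ⟨mem_univ _, (noConsecutiveLast_congr h).2 hx, funext fun s => ?_⟩
  by_cases hs : s ∈ afterLast x <;> simp [skel, afterLast_congr h, hs]

theorem lastSet_fill (hw : w ∈ skeletons d m) (y : afterLast w → Fin d) :
    lastSet (fill w y) = lastSet w := by
  obtain ⟨-, -, hskel⟩ := mem_filter.1 hw
  ext s
  by_cases hs : s ∈ afterLast w
  · have hw0 : w s = 0 := by rw [← hskel]; simp [skel, hs]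
    simp [fill, hs, hw0, NeZero.ne d, Fin.castSucc_ne_last]
  · simp [fill, hs]

theorem skel_fill (hw : w ∈ skeletons d m) (y : afterLast w → Fin d) : skel (fill w y) = w := by
  obtain ⟨-, -, hskel⟩ := mem_filter.1 hw
  funext s
  rw [skel, afterLast_congr (lastSet_fill hw y)]
  by_cases hs : s ∈ afterLast w
  · rw [if_pos hs, ← hskel, skel, if_pos hs]
  · simp [fill, hs]

theorem sum_fill_eq_sum_fiber (hw : w ∈ skeletons d m) (f : (Fin m → Fin (d + 1)) → ℝ) :
    ∑ y : afterLast w → Fin d, f (fill w y) =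
      ∑ x ∈ (univ.filter NoConsecutiveLast).filter (skel · = w), f x := by
  have hfiber {x} (hx : x ∈ (univ.filter NoConsecutiveLast).filter (skel · = w)) :
      NoConsecutiveLast x ∧ afterLast w = afterLast x := by
    obtain ⟨hgood, rfl⟩ : NoConsecutiveLast x ∧ skel x = w := by simpa using hx
    exact ⟨hgood, afterLast_congr (lastSet_skel hgood)⟩
  refine sum_bij' (fun y _ => fill w y)
    (fun x hx s => (x s).castPred ((hfiber hx).1.ne_last ((hfiber hx).2 ▸ s.2)))
    (fun y _ => ?_) (fun _ _ => mem_univ _) (fun y _ => ?_) (fun x hx => ?_) (fun _ _ => rfl)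
  · have hpat := lastSet_fill hw y
    simpa [skel_fill hw] using (noConsecutiveLast_congr hpat).2 (mem_filter.1 hw).2.1
  · funext s
    simp [fill_apply_coe]
  · obtain ⟨hgood, hpos⟩ := hfiber hx
    obtain rfl : skel x = w := (mem_filter.1 hx).2
    funext s
    by_cases hs : s ∈ afterLast (skel x)
    · simp [fill, hs]
    · simp [fill, hs, skel, ← hpos]

end Skeleton

theorem sum_eq_sum_skeletons_sum_fill {d m : ℕ} [NeZero d] (f : (Fin m → Fin (d + 1)) → ℝ)
    (hf : ∀ x, ¬ NoConsecutiveLast x → f x = 0) :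
    ∑ x, f x = ∑ w ∈ skeletons d m, ∑ y : afterLast w → Fin d, f (fill w y) := by
  rw [← sum_filter_of_ne fun x _ hx => not_not.1 (mt (hf x) hx),
    ← sum_fiberwise_of_maps_to fun x hx => skel_mem_skeletons (mem_filter.1 hx).2]
  exact sum_congr rfl fun w hw => (sum_fill_eq_sum_fiber hw f).symm

section Conditioning

variable {d m : ℕ} {ps : ℝ} {η η₁ η₂ : Fin d → ℝ} (P : Finset (Fin m) → Prop)

open scoped Classical in
def condMass (ps : ℝ) (η : Fin d → ℝ) (x : Fin m → Fin (d + 1)) : ℝ :=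
  if P (lastSet x) then trajP (MG d ps η) (pInit d ps) x else 0

theorem condP_eq :
    condP ps η (fun x => P (lastSet x)) =
      fun x => condMass P ps η x / ∑ y, condMass P ps η y := rfl

theorem condMass_nonneg (h0 : 0 ≤ ps) (h1 : ps ≤ 1) (x : Fin m → Fin (d + 1)) :
    0 ≤ condMass P ps 1 x := by
  unfold condMass
  split_ifs
  exacts [trajP_nonneg (MG_one_nonneg h0 h1) (pInit_nonneg h0 h1) x, le_rfl]

theorem condMass_eq_zero {x : Fin m → Fin (d + 1)} (hx : ¬ NoConsecutiveLast x) :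
    condMass P ps η x = 0 := by
  simp [condMass, trajP_MG_eq_zero hx]

theorem condMass_fill [NeZero d] {w : Fin m → Fin (d + 1)} (hw : w ∈ skeletons d m)
    (y : afterLast w → Fin d) :
    condMass P ps η (fill w y) = condMass P ps 1 w * piDist η (afterLast w) y := by
  have hpat := lastSet_fill hw y
  unfold condMass
  rw [hpat]
  split_ifs
  · rw [trajP_MG_eq_mul_prod, trajP_MG_one_congr hpat, afterLast_congr hpat, ← prod_coe_sort]
    simp [piDist, fill_apply_coe]
  · simp

variable [NeZero d]

theorem sum_condMass (hη : ∑ i, η i = 1) :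
    ∑ x, condMass P ps η x = ∑ w ∈ skeletons d m, condMass P ps 1 w := by
  rw [sum_eq_sum_skeletons_sum_fill _ fun x hx => condMass_eq_zero P hx]
  refine sum_congr rfl fun w hw => ?_
  simp_rw [condMass_fill P hw, ← mul_sum, sum_piDist _ hη, mul_one]

theorem tvDist_condMass (h0 : 0 ≤ ps) (h1 : ps ≤ 1) :
    tvDist (condMass P ps η₁) (condMass P ps η₂) =
      ∑ w ∈ skeletons d m, condMass P ps 1 w *
        tvDist (piDist η₁ (afterLast w)) (piDist η₂ (afterLast w)) := by
  unfold tvDist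
  rw [sum_eq_sum_skeletons_sum_fill _ fun x hx => by simp [condMass_eq_zero P hx], mul_sum]
  refine sum_congr rfl fun w hw => ?_
  simp_rw [condMass_fill P hw, ← mul_sub, abs_mul, abs_of_nonneg (condMass_nonneg P h0 h1 w),
    ← mul_sum]
  ring

theorem tvDist_condP_le (h0 : 0 ≤ ps) (h1 : ps ≤ 1) (hη₁ : ∑ i, η₁ i = 1)
    (hη₂ : ∑ i, η₂ i = 1) {κ : Type*} [Fintype κ] [DecidableEq κ]
    (hP : ∀ S, P S → S.card ≤ Fintype.card κ) :
    tvDist (condP ps η₁ (fun x => P (lastSet x))) (condP ps η₂ (fun x => P (lastSet x))) ≤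
      tvDist (piDist η₁ κ) (piDist η₂ κ) := by
  have hZ : 0 ≤ ∑ w ∈ skeletons d m, condMass P ps 1 w :=
    sum_nonneg fun w _ => condMass_nonneg P h0 h1 w
  rw [condP_eq, condP_eq, sum_condMass P hη₁, sum_condMass P hη₂, tvDist_div_const,
    tvDist_condMass P h0 h1, abs_of_nonneg hZ]
  refine div_le_of_le_mul₀ hZ (tvDist_nonneg _ _) ?_
  rw [mul_sum]
  refine sum_le_sum fun w _ => ?_
  by_cases hw : P (lastSet w)
  · rw [mul_comm]
    refine mul_le_mul_of_nonneg_right (tvDist_piDist_le_of_card_le hη₁ hη₂ ?_)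
      (condMass_nonneg P h0 h1 w)
    simpa using (card_afterLast_le w).trans (hP _ hw)
  · simp [condMass, hw]

end Conditioning

theorem tv_cond_le_le_tv_product_general
    (d m : ℕ) (hd : 2 ≤ d) (ps : ℝ) (hps : 0 < ps) (hps2 : ps ≤ 1 / (2 * ((d : ℝ) + 1)))
    (η₁ η₂ : Fin d → ℝ) (h1 : IsDist η₁) (h2 : IsDist η₂)
    (n : ℕ) :
    tvDist (condP (m := m) ps η₁ (fun x => Nlast d m x ≤ n))
        (condP (m := m) ps η₂ (fun x => Nlast d m x ≤ n)) ≤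
      tvDist (prodP η₁ n) (prodP η₂ n) := by
  have : NeZero d := ⟨by omega⟩
  have hps1 : ps ≤ 1 := hps2.trans <| by
    rw [div_le_one (by positivity)]
    linarith [(d.cast_nonneg : (0 : ℝ) ≤ d)]
  simp only [Nlast_eq_card_lastSet]
  exact tvDist_condP_le (fun S => S.card ≤ n) hps.le hps1 h1.2 h2.2 (κ := Fin n)
    fun S hS => by simpa using hS

/-- Combined decoupling bound: the TV distance between the conditional trajectory
laws given `N_{d+1} ≤ n` is at most the TV distance between `η₁^{⊗n}` and
`η₂^{⊗n}`. -/
theorem tv_cond_le_le_tv_product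
    (d m : ℕ) (hd : 2 ≤ d) (ps : ℝ) (hps : 0 < ps) (hps2 : ps ≤ 1 / (2 * ((d : ℝ) + 1)))
    (η₁ η₂ : Fin d → ℝ) (h1 : IsDist η₁) (h2 : IsDist η₂)
    (n : ℕ) (hn1 : 1 ≤ n) (hn2 : 2 * n ≤ m + 1) :
    tvDist (condP (m := m) ps η₁ (fun x => Nlast d m x ≤ n))
        (condP (m := m) ps η₂ (fun x => Nlast d m x ≤ n)) ≤
      tvDist (prodP η₁ n) (prodP η₂ n) :=
  tv_cond_le_le_tv_product_general d m hd ps hps hps2 η₁ η₂ h1 h2 n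

end
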